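/- Let G be a connected graph on vertex set {u', u''} ∪ R where u'u'' ∈ E(G), every vertex of R is adjacent to both u' and u'', G[R] has maximum degree at most 2, and in the normalized Perron vector x of G one has x_{u'} = x_{u''} = 1 and x_v ≤ 1/10 for all v ∈ R. Then for every v ∈ R, 2/ρ(G) ≤ x_v ≤ 2/ρ(G) + 6/ρ(G)². -/

import Mathlib

open SimpleGraph

/-- The adjacency spectral radius of a finite simple graph. -/
noncomputable def specRad {V : Type*} [Fintype V] [DecidableEq V] (G : SimpleGraph V) : ℝ :=
  letI := Classical.decRel G.Adj
  sSup ((fun μ : ℝ => |μ|) '' spectrum ℝ (G.adjMatrix ℝ))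

/-- `G` contains a copy of `H` as a subgraph. -/
def Contains {V W : Type*} (G : SimpleGraph V) (H : SimpleGraph W) : Prop :=
  ∃ f : W ↪ V, ∀ a b, H.Adj a b → G.Adj (f a) (f b)

/-- `G` contains `C_{l,l}`: two cycles of length `l` sharing exactly one vertex. -/
def ContainsCll {V : Type*} (G : SimpleGraph V) (l : ℕ) : Prop :=
  ∃ (u : V) (c₁ c₂ : G.Walk u u), c₁.IsCycle ∧ c₂.IsCycle ∧ c₁.length = l ∧ c₂.length = l ∧
    ∀ v, v ∈ c₁.support → v ∈ c₂.support → v = u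

/-- Theta graph on `k` vertices: the cycle `0,1,…,k-1` plus a chord from `0` to `a`. -/
def thetaGraph (k a : ℕ) : SimpleGraph (Fin k) :=
  SimpleGraph.fromRel (fun i j =>
    (j : ℕ) = (i : ℕ) + 1 ∨ ((i : ℕ) = k - 1 ∧ (j : ℕ) = 0) ∨ ((i : ℕ) = 0 ∧ (j : ℕ) = a))

/-- `G` contains some member of `Θ_k`, the set of Theta graphs on `k` vertices. -/
def ContainsTheta {V : Type*} (G : SimpleGraph V) (k : ℕ) : Prop :=
  ∃ a, 2 ≤ a ∧ a ≤ k - 2 ∧ Contains G (thetaGraph k a)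

/-- The join of two graphs: all edges between the two vertex sets are added. -/
def joinG {V W : Type*} (G : SimpleGraph V) (H : SimpleGraph W) : SimpleGraph (V ⊕ W) where
  Adj a b := match a, b with
    | Sum.inl a, Sum.inl b => G.Adj a b
    | Sum.inr a, Sum.inr b => H.Adj a b
    | Sum.inl _, Sum.inr _ => True
    | Sum.inr _, Sum.inl _ => True
  symm := by
    refine ⟨?_⟩
    rintro (a | a) (b | b) h
    · exact h.symm
    · trivial
    · trivial
    · exact h.symm
  loopless := by
    refine ⟨?_⟩
    rintro (a | a) h
    · exact G.irrefl h
    · exact H.irrefl h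

/-- The disjoint union of `t` paths, the `i`-th having `f i` vertices. -/
def pathsUnion (t : ℕ) (f : ℕ → ℕ) : SimpleGraph (Σ i : Fin t, Fin (f i.1)) where
  Adj a b := a.1 = b.1 ∧ ((a.2 : ℕ) + 1 = (b.2 : ℕ) ∨ (b.2 : ℕ) + 1 = (a.2 : ℕ))
  symm := by
    refine ⟨?_⟩
    rintro ⟨i, a⟩ ⟨j, b⟩ ⟨h₁, h₂⟩
    exact ⟨h₁.symm, h₂.symm⟩
  loopless := by
    refine ⟨?_⟩
    rintro ⟨i, a⟩ ⟨-, h⟩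
    omega

/-- `H` is a minor of `G`: disjoint connected branch sets, one for each vertex of `H`,
with edges of `G` between branch sets corresponding to edges of `H`. -/
def IsMinor {V W : Type*} (H : SimpleGraph W) (G : SimpleGraph V) : Prop :=
  ∃ B : W → Set V, (∀ w, (B w).Nonempty) ∧ (∀ w, (G.induce (B w)).Connected) ∧
    (∀ w₁ w₂, w₁ ≠ w₂ → Disjoint (B w₁) (B w₂)) ∧
    ∀ w₁ w₂, H.Adj w₁ w₂ → ∃ v₁ ∈ B w₁, ∃ v₂ ∈ B w₂, G.Adj v₁ v₂

/-- Planarity via Wagner's theorem: no `K₅` minor and no `K₃,₃` minor. -/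
def IsPlanar {V : Type*} (G : SimpleGraph V) : Prop :=
  ¬ IsMinor (⊤ : SimpleGraph (Fin 5)) G ∧
  ¬ IsMinor (completeBipartiteGraph (Fin 3) (Fin 3)) G

/-
At `v ∈ R` the eigenequation reads `ρ x_v = 2 + Σ_{u ∈ N_R(v)} x_u`, a sum of at most
two terms. Since every `x_u ≤ 1/10`, this gives first `ρ x_u ≤ 3` for every `u ∈ R`, and feeding
that back into the same equation gives `ρ² x_v ≤ 2ρ + 6`. The lower bound is `Σ ≥ 0`.
-/

open Finset Matrix

theorem SimpleGraph.sum_neighborFinset_eq_mul_of_adjMatrix_mulVec_eq_smul {V : Type*} [Fintype V]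
    (G : SimpleGraph V) [DecidableRel G.Adj] {x : V → ℝ} {ρ : ℝ}
    (h : G.adjMatrix ℝ *ᵥ x = ρ • x) (u : V) :
    ∑ w ∈ G.neighborFinset u, x w = ρ * x u := by
  simpa [adjMatrix_mulVec_apply] using congrFun h u

theorem SimpleGraph.sum_neighborFinset_inr_of_forall_adj {S R : Type*} [Fintype S] [Fintype R]
    (G : SimpleGraph (S ⊕ R)) [DecidableRel G.Adj]
    (hspan : ∀ i v, G.Adj (Sum.inl i) (Sum.inr v)) (f : S ⊕ R → ℝ) (v : R) :
    ∑ w ∈ G.neighborFinset (Sum.inr v), f w =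
      ∑ i, f (Sum.inl i) + ∑ w ∈ univ.filter (fun w => G.Adj (Sum.inr v) (Sum.inr w)),
        f (Sum.inr w) := by
  rw [neighborFinset_eq_filter, sum_filter, Fintype.sum_sum_type, sum_filter]
  simp [(hspan _ v).symm]

theorem Finset.sum_le_mul_of_card_le {ι : Type*} {s : Finset ι} {f : ι → ℝ} {c : ℝ} {d : ℕ}
    (hc : 0 ≤ c) (hs : #s ≤ d) (hf : ∀ i ∈ s, f i ≤ c) : ∑ i ∈ s, f i ≤ d * c :=
  calc ∑ i ∈ s, f i ≤ #s * c := by simpa using sum_le_card_nsmul s f c hf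
    _ ≤ d * c := by gcongr

section Bootstrap

variable {ι : Type*} {N : ι → Finset ι} {y : ι → ℝ} {ρ : ℝ}

theorem two_div_le_of_eq_two_add_sum (hy : ∀ v, 0 < y v)
    (heq : ∀ v, ρ * y v = 2 + ∑ w ∈ N v, y w) (v : ι) : 0 < ρ ∧ 2 / ρ ≤ y v := by
  have hsum : 0 ≤ ∑ w ∈ N v, y w := sum_nonneg fun w _ => (hy w).le
  have hρ : 0 < ρ := pos_of_mul_pos_left (by linarith [heq v]) (hy v).le
  exact ⟨hρ, by rw [div_le_iff₀' hρ]; linarith [heq v]⟩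

theorem mul_le_three_of_eq_two_add_sum (hN : ∀ v, #(N v) ≤ 2) (hsmall : ∀ v, y v ≤ 1 / 10)
    (heq : ∀ v, ρ * y v = 2 + ∑ w ∈ N v, y w) (v : ι) : ρ * y v ≤ 3 := by
  have := sum_le_mul_of_card_le (by norm_num) (hN v) fun w _ => hsmall w
  push_cast at this
  linarith [heq v]

theorem le_two_div_add_six_div_sq_of_eq_two_add_sum (hN : ∀ v, #(N v) ≤ 2)
    (hsmall : ∀ v, y v ≤ 1 / 10) (hρ : 0 < ρ) (heq : ∀ v, ρ * y v = 2 + ∑ w ∈ N v, y w)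
    (v : ι) : y v ≤ 2 / ρ + 6 / ρ ^ 2 := by
  have hρsum : ρ * ∑ w ∈ N v, y w ≤ 6 := by
    have := sum_le_mul_of_card_le (by norm_num) (hN v) fun w _ =>
      mul_le_three_of_eq_two_add_sum hN hsmall heq w
    push_cast at this
    rw [mul_sum]
    linarith
  have : ρ ^ 2 * y v ≤ 2 * ρ + 6 := by
    calc ρ ^ 2 * y v = ρ * (ρ * y v) := by ring
      _ = 2 * ρ + ρ * ∑ w ∈ N v, y w := by rw [heq v]; ring
      _ ≤ 2 * ρ + 6 := by linarith
  rw [div_add_div _ _ hρ.ne' (by positivity), le_div_iff₀ (by positivity)]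
  nlinarith

end Bootstrap

open Matrix in
open scoped Classical in
theorem stmt12_general {R : Type*} [Fintype R] [DecidableEq R] (G : SimpleGraph (Fin 2 ⊕ R))
    (hspan : ∀ (i : Fin 2) (v : R), G.Adj (Sum.inl i) (Sum.inr v))
    (hdeg : ∀ v : R, {w : R | G.Adj (Sum.inr v) (Sum.inr w)}.ncard ≤ 2)
    (x : Fin 2 ⊕ R → ℝ) (hpos : ∀ v, 0 < x v)
    (heig : G.adjMatrix ℝ *ᵥ x = specRad G • x)
    (h1 : x (Sum.inl 0) = 1) (h2 : x (Sum.inl 1) = 1)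
    (hsmall : ∀ v : R, x (Sum.inr v) ≤ 1 / 10) :
    ∀ v : R, 2 / specRad G ≤ x (Sum.inr v) ∧
      x (Sum.inr v) ≤ 2 / specRad G + 6 / (specRad G) ^ 2 := by
  set N : R → Finset R := fun v => univ.filter fun w => G.Adj (Sum.inr v) (Sum.inr w)
  have hN : ∀ v, #(N v) ≤ 2 := fun v => by
    simpa [N, Set.ncard_eq_toFinset_card'] using hdeg v
  have heq : ∀ v, specRad G * x (Sum.inr v) = 2 + ∑ w ∈ N v, x (Sum.inr w) := fun v => by
    rw [← G.sum_neighborFinset_eq_mul_of_adjMatrix_mulVec_eq_smul heig,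
      G.sum_neighborFinset_inr_of_forall_adj hspan, Fin.sum_univ_two, h1, h2]
    norm_num [N]
  intro v
  obtain ⟨hρ, hlower⟩ := two_div_le_of_eq_two_add_sum (fun w => hpos _) heq v
  exact ⟨hlower, le_two_div_add_six_div_sq_of_eq_two_add_sum hN hsmall hρ heq v⟩

open Matrix in
open scoped Classical in
theorem stmt12 {R : Type*} [Fintype R] [DecidableEq R] (G : SimpleGraph (Fin 2 ⊕ R))
    (hconn : G.Connected)
    (hK2 : G.Adj (Sum.inl 0) (Sum.inl 1))
    (hspan : ∀ (i : Fin 2) (v : R), G.Adj (Sum.inl i) (Sum.inr v))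
    (hdeg : ∀ v : R, {w : R | G.Adj (Sum.inr v) (Sum.inr w)}.ncard ≤ 2)
    (x : Fin 2 ⊕ R → ℝ) (hpos : ∀ v, 0 < x v) (hmax : ∀ v, x v ≤ 1)
    (heig : G.adjMatrix ℝ *ᵥ x = specRad G • x)
    (h1 : x (Sum.inl 0) = 1) (h2 : x (Sum.inl 1) = 1)
    (hsmall : ∀ v : R, x (Sum.inr v) ≤ 1 / 10) :
    ∀ v : R, 2 / specRad G ≤ x (Sum.inr v) ∧
      x (Sum.inr v) ≤ 2 / specRad G + 6 / (specRad G) ^ 2 :=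
  stmt12_general G hspan hdeg x hpos heig h1 h2 hsmall
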